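/- arXiv:2011.03603 — 2 statements merged into one kernel-verified Lean document; each statement's English description precedes it below -/
import Mathlib

section
/- Suppose a real-valued quantity R satisfies both R ≥ P* + S*/F and R ≥ S*, where P*, S* ≥ 0 and F ≥ 1 is an integer, and suppose OPT = P* + S*. Then R ≥ OPT · F/(2F-1). -/
/-- Abstract form of the FlowDec approximation theorem. -/
theorem flowdec_approximation (F : ℕ) (hF : 1 ≤ F) (P S R OPT : ℝ)
    (hP : 0 ≤ P) (hS : 0 ≤ S) (h1 : R ≥ P + S / F) (h2 : R ≥ S)
    (hOPT : OPT = P + S) :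
    R ≥ OPT * ((F : ℝ) / (2 * F - 1)) := by
  have hF1 : (1 : ℝ) ≤ (F : ℝ) := by exact_mod_cast hF
  have hFpos : (0 : ℝ) < F := by linarith
  have hden : (0 : ℝ) < 2 * (F : ℝ) - 1 := by linarith
  rw [ge_iff_le, hOPT, mul_div_assoc', div_le_iff₀ hden]; simp only [ge_iff_le] at h1 h2
  have h1' : (F : ℝ) * R ≥ (F : ℝ) * P + S := by
    have := mul_le_mul_of_nonneg_left h1 (le_of_lt hFpos)
    rw [mul_add, mul_div_cancel₀ _ (ne_of_gt hFpos)] at this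
    linarith
  nlinarith [mul_le_mul_of_nonneg_left h2 (by linarith : (0:ℝ) ≤ (F:ℝ) - 1)]
end

section
/- For integers F ≥ 1 and any real x ∈ [0,1] representing S*/OPT, the guarantee of FlowDec as a function of x is at least max{1 - x + x/F, x}, and min over x ∈ [0,1] of max{1 - x + x/F, x} equals F/(2F-1), attained at x = F/(2F-1). -/
/-!
Both guarantees are lines in `x`: `1 - x + x / F = 1 - a x` with slope `-a = -(1 - 1/F) ≤ 0`,
and `x` itself. A decreasing and an increasing line meet at `c = 1 / (1 + a) = F / (2F - 1)`,
and their maximum is at least the common value `c` everywhere: to the right of `c` the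
increasing line is above it, to the left the decreasing one.
-/

section CrossingLines

variable {K : Type*} [Field K] [LinearOrder K] [IsStrictOrderedRing K] {a c : K}

theorem le_max_one_sub_mul (ha : 0 ≤ a) (hc : c * (1 + a) = 1) (x : K) :
    c ≤ max (1 - a * x) x := by
  rcases le_or_gt c x with hcx | hxc
  · exact le_max_of_le_right hcx
  · refine le_max_of_le_left ?_
    calc c = 1 - a * c := by linear_combination hc
      _ ≤ 1 - a * x := by nlinarith

theorem max_one_sub_mul_self (hc : c * (1 + a) = 1) : max (1 - a * c) c = c := by
  rw [show 1 - a * c = c by linear_combination -hc, max_self]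

theorem mem_Icc_of_mul_one_add_eq_one (ha : 0 ≤ a) (hc : c * (1 + a) = 1) :
    c ∈ Set.Icc (0 : K) 1 := by
  have hc0 : 0 < c := pos_of_mul_pos_left (hc ▸ one_pos) (by linarith)
  exact ⟨hc0.le, by nlinarith⟩

end CrossingLines

theorem div_two_mul_sub_one_mul_eq_one {K : Type*} [Field K] [LinearOrder K]
    [IsStrictOrderedRing K] {F : K} (hF : 1 ≤ F) :
    F / (2 * F - 1) * (1 + (1 - F⁻¹)) = 1 := by
  have hF0 : F ≠ 0 := by positivity
  have hd : 2 * F - 1 ≠ 0 := by linarith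
  rw [div_mul_eq_mul_div, div_eq_one_iff_eq hd]
  field_simp
  ring

/-- Reparameterization by x = S*/OPT: FlowDec's guarantee max{1-x+x/F, x} is
minimized over [0,1] at x = F/(2F-1), with value F/(2F-1). -/
theorem flowdec_reparam (F : ℕ) (hF : 1 ≤ F) :
    (∀ x ∈ Set.Icc (0 : ℝ) 1,
      (F : ℝ) / (2 * F - 1) ≤ max (1 - x + x / F) x) ∧
    ((F : ℝ) / (2 * F - 1) ∈ Set.Icc (0 : ℝ) 1) ∧
    max (1 - (F : ℝ) / (2 * F - 1) + ((F : ℝ) / (2 * F - 1)) / F)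
        ((F : ℝ) / (2 * F - 1)) = (F : ℝ) / (2 * F - 1) := by
  have hF' : (1 : ℝ) ≤ F := by exact_mod_cast hF
  have ha : 0 ≤ 1 - (F : ℝ)⁻¹ := sub_nonneg.2 (inv_le_one_of_one_le₀ hF')
  have hc := div_two_mul_sub_one_mul_eq_one hF'
  have private_first : ∀ x : ℝ, 1 - x + x / F = 1 - (1 - (F : ℝ)⁻¹) * x := fun x => by ring
  refine ⟨fun x _ => ?_, mem_Icc_of_mul_one_add_eq_one ha hc, ?_⟩
  · rw [private_first]
    exact le_max_one_sub_mul ha hc x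
  · rw [private_first]
    exact max_one_sub_mul_self hc
end
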